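/- Let D ∈ F_{Q_{a−2}}^{r×a} be an interference matrix, i.e., a matrix D = (d_{i,j}) with d_{i,j} = 0 for j ∈ {0,1} and d_{i,j} ∈ F_{Q_{j−1}} for 2 ≤ j ≤ a−1. Then every square submatrix of Γ + D is nonsingular: for all index sets I ⊆ {0,…,r−1} and J ⊆ {0,…,a−1} with |I| = |J|, the determinant of the submatrix of Γ + D with rows I and columns J is nonzero. -/

import Mathlib

/-- Every square submatrix of `M` is nonsingular. -/
def AllSquareSubmatricesNonsingular {K : Type} [Field K] {r a : ℕ}
    (M : Matrix (Fin r) (Fin a) K) : Prop :=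
  ∀ (z : ℕ) (ρ : Fin z → Fin r) (σ : Fin z → Fin a),
    Function.Injective ρ → Function.Injective σ → (M.submatrix ρ σ).det ≠ 0

/-- `Γ = C ⬝ diag(α₀,…,α_{a-1})`, i.e. the `j`-th column of `C` scaled by `α j`. -/
def gammaMatrix {K : Type} [Field K] {r a : ℕ} (C : Matrix (Fin r) (Fin a) K)
    (α : Fin a → K) : Matrix (Fin r) (Fin a) K :=
  Matrix.of fun i j => C i j * α j

/-!
Replace the columns of `C` by those of `Γ + D` one at a time, from left to right. When column
`j ≥ 2` is replaced, every other entry of the matrix lies in `F_{Q_{j-1}}`, and the new column is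
`α_j • C_j + D_j` with `D_j` over `F_{Q_{j-1}}`. By linearity of the determinant in that column, a
square minor through it becomes `α_j X + Y` with `X, Y ∈ F_{Q_{j-1}}` and `X` the old, nonzero,
minor; it cannot vanish since `α_j ∉ F_{Q_{j-1}}`.
-/

namespace Matrix

variable {l m n o : Type*}

theorem det_mem_of_forall_mem {R S : Type*} [CommRing R] [SetLike S R] [SubringClass S R]
    [Fintype n] [DecidableEq n] (s : S) {M : Matrix n n R} (hM : ∀ i j, M i j ∈ s) :
    M.det ∈ s := by
  rw [det_apply']
  exact sum_mem fun σ _ => mul_mem (intCast_mem s _) (prod_mem fun i _ => hM _ _)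

theorem submatrix_updateCol_of_injective [DecidableEq n] [DecidableEq o] {α : Type*}
    (A : Matrix m n α) {f : o → n} (hf : Function.Injective f) (k : o) (c : m → α)
    (e : l → m) :
    (A.updateCol (f k) c).submatrix e f = (A.submatrix e f).updateCol k (c ∘ e) := by
  ext i j
  simp [updateCol_apply, hf.eq_iff]

theorem submatrix_updateCol_of_notMem_range [DecidableEq n] {α : Type*} (A : Matrix m n α)
    {j : n} (c : m → α) (e : l → m) {f : o → n} (hj : j ∉ Set.range f) :
    (A.updateCol j c).submatrix e f = A.submatrix e f := by
  ext i k
  have : f k ≠ j := fun h => hj ⟨k, h⟩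
  simp [this]

theorem det_updateCol_smul_add_ne_zero {K : Type*} [Field K] [Fintype n] [DecidableEq n]
    (S : Subfield K) {M : Matrix n n K} (hM : ∀ i j, M i j ∈ S) (hdet : M.det ≠ 0) (k : n)
    {c : K} (hc : c ∉ S) {v : n → K} (hv : ∀ i, v i ∈ S) :
    (M.updateCol k (c • (fun i => M i k) + v)).det ≠ 0 := by
  rw [det_updateCol_add, det_updateCol_smul, updateCol_eq_self]
  have hY : (M.updateCol k v).det ∈ S := det_mem_of_forall_mem S fun i j => by
    rcases eq_or_ne j k with rfl | hjk
    · simpa using hv i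
    · simpa [updateCol_ne hjk] using hM i j
  intro h
  have hc_eq : c = -(M.updateCol k v).det / M.det := by
    rw [eq_div_iff hdet]
    linear_combination h
  exact hc (hc_eq ▸ S.div_mem (S.neg_mem hY) (det_mem_of_forall_mem S hM))

def spliceCols {α : Type*} {r a : ℕ} (M N : Matrix (Fin r) (Fin a) α) (t : ℕ) :
    Matrix (Fin r) (Fin a) α :=
  of fun i j => if (j : ℕ) < t then M i j else N i j

variable {α : Type*} {r a : ℕ} (M N : Matrix (Fin r) (Fin a) α)

@[simp]
theorem spliceCols_zero : spliceCols M N 0 = N := by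
  ext i j
  simp [spliceCols]

theorem spliceCols_of_le {t : ℕ} (ht : a ≤ t) : spliceCols M N t = M := by
  ext i j
  simp [spliceCols, j.2.trans_le ht]

theorem spliceCols_succ (j : Fin a) :
    spliceCols M N (j + 1) = (spliceCols M N j).updateCol j fun i => M i j := by
  ext i k
  rcases eq_or_ne k j with rfl | hkj
  · simp [spliceCols]
  · have hk : (k : ℕ) < j + 1 ↔ (k : ℕ) < j := by
      have := Fin.val_ne_of_ne hkj
      omega
    simp only [spliceCols, of_apply, updateCol_ne hkj, hk]

@[simp]
theorem spliceCols_apply_self (i : Fin r) (j : Fin a) : spliceCols M N j i j = N i j := by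
  simp [spliceCols]

end Matrix

open Matrix

theorem AllSquareSubmatricesNonsingular.updateCol_smul_add {K : Type} [Field K] {r a : ℕ}
    {M : Matrix (Fin r) (Fin a) K} (hM : AllSquareSubmatricesNonsingular M)
    (S : Subfield K) (hMS : ∀ i j, M i j ∈ S) (j : Fin a) {c : K} (hc : c ∉ S)
    {v : Fin r → K} (hv : ∀ i, v i ∈ S) :
    AllSquareSubmatricesNonsingular (M.updateCol j (c • (fun i => M i j) + v)) := by
  intro z ρ σ hρ hσ
  by_cases hj : j ∈ Set.range σ
  · obtain ⟨k, rfl⟩ := hj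
    rw [submatrix_updateCol_of_injective _ hσ]
    exact det_updateCol_smul_add_ne_zero S (fun _ _ => hMS _ _) (hM z ρ σ hρ hσ) k hc
      (fun _ => hv _)
  · rw [submatrix_updateCol_of_notMem_range _ _ _ hj]
    exact hM z ρ σ hρ hσ
section interference

variable {K : Type} [Field K] {r a : ℕ} {Fsub : ℕ → Subfield K}
  {C D : Matrix (Fin r) (Fin a) K} {α : Fin a → K}

theorem gammaMatrix_add_apply_of_le_one
    (hα01 : ∀ j : Fin a, (j : ℕ) ≤ 1 → α j = 1)
    (hD0 : ∀ (i : Fin r) (j : Fin a), (j : ℕ) ≤ 1 → D i j = 0)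
    (i : Fin r) {j : Fin a} (hj : (j : ℕ) ≤ 1) :
    (gammaMatrix C α + D) i j = C i j := by
  simp [gammaMatrix, hα01 j hj, hD0 i j hj]

theorem gammaMatrix_add_apply_mem (hmono : Monotone Fsub) (hC : ∀ i j, C i j ∈ Fsub 0)
    (hα01 : ∀ j : Fin a, (j : ℕ) ≤ 1 → α j = 1)
    (hαmem : ∀ j : Fin a, 2 ≤ (j : ℕ) → α j ∈ Fsub j)
    (hD0 : ∀ (i : Fin r) (j : Fin a), (j : ℕ) ≤ 1 → D i j = 0)
    (hDmem : ∀ (i : Fin r) (j : Fin a), 2 ≤ (j : ℕ) → D i j ∈ Fsub ((j : ℕ) - 1))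
    (i : Fin r) (j : Fin a) :
    (gammaMatrix C α + D) i j ∈ Fsub j := by
  by_cases hj : (j : ℕ) ≤ 1
  · rw [gammaMatrix_add_apply_of_le_one hα01 hD0 i hj]
    exact hmono (Nat.zero_le _) (hC i j)
  · have hj2 : 2 ≤ (j : ℕ) := by omega
    exact add_mem (mul_mem (hmono (Nat.zero_le _) (hC i j)) (hαmem j hj2))
      (hmono (Nat.sub_le _ _) (hDmem i j hj2))

theorem spliceCols_gammaMatrix_add_apply_mem (hmono : Monotone Fsub)
    (hC : ∀ i j, C i j ∈ Fsub 0)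
    (hα01 : ∀ j : Fin a, (j : ℕ) ≤ 1 → α j = 1)
    (hαmem : ∀ j : Fin a, 2 ≤ (j : ℕ) → α j ∈ Fsub j)
    (hD0 : ∀ (i : Fin r) (j : Fin a), (j : ℕ) ≤ 1 → D i j = 0)
    (hDmem : ∀ (i : Fin r) (j : Fin a), 2 ≤ (j : ℕ) → D i j ∈ Fsub ((j : ℕ) - 1))
    (t : ℕ) (i : Fin r) (j : Fin a) :
    spliceCols (gammaMatrix C α + D) C t i j ∈ Fsub (t - 1) := by
  by_cases hj : (j : ℕ) < t
  · simpa [spliceCols, hj] using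
      hmono (by omega) (gammaMatrix_add_apply_mem hmono hC hα01 hαmem hD0 hDmem i j)
  · simpa [spliceCols, hj] using hmono (Nat.zero_le _) (hC i j)

theorem allSquareSubmatricesNonsingular_spliceCols_gammaMatrix_add (hmono : Monotone Fsub)
    (hC : ∀ i j, C i j ∈ Fsub 0) (hCns : AllSquareSubmatricesNonsingular C)
    (hα01 : ∀ j : Fin a, (j : ℕ) ≤ 1 → α j = 1)
    (hαmem : ∀ j : Fin a, 2 ≤ (j : ℕ) → α j ∈ Fsub (j : ℕ) ∧ α j ∉ Fsub ((j : ℕ) - 1))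
    (hD0 : ∀ (i : Fin r) (j : Fin a), (j : ℕ) ≤ 1 → D i j = 0)
    (hDmem : ∀ (i : Fin r) (j : Fin a), 2 ≤ (j : ℕ) → D i j ∈ Fsub ((j : ℕ) - 1)) (t : ℕ) :
    AllSquareSubmatricesNonsingular (spliceCols (gammaMatrix C α + D) C t) := by
  induction t with
  | zero => simpa using hCns
  | succ t ih =>
    rcases lt_or_ge t a with ht | ht
    · obtain ⟨j, rfl⟩ : ∃ j : Fin a, (j : ℕ) = t := ⟨⟨t, ht⟩, rfl⟩
      rw [spliceCols_succ]
      by_cases h2 : 2 ≤ (j : ℕ)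
      · have hcol : (fun i => (gammaMatrix C α + D) i j) =
            α j • (fun i => spliceCols (gammaMatrix C α + D) C j i j) + fun i => D i j := by
          ext i
          simp [gammaMatrix, mul_comm]
        rw [hcol]
        exact ih.updateCol_smul_add (Fsub (j - 1))
          (spliceCols_gammaMatrix_add_apply_mem hmono hC hα01 (fun j hj => (hαmem j hj).1)
            hD0 hDmem j)
          j (hαmem j h2).2 fun i => hDmem i j h2
      · have hcol : (fun i => (gammaMatrix C α + D) i j) =
            fun i => spliceCols (gammaMatrix C α + D) C j i j := by
          ext i
          simp [gammaMatrix_add_apply_of_le_one hα01 hD0 i (show (j : ℕ) ≤ 1 by omega)]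
        rwa [hcol, updateCol_eq_self]
    · rw [spliceCols_of_le _ _ ht] at ih
      rwa [spliceCols_of_le _ _ (by omega)]

end interference

theorem gamma_plus_interference_nonsingular
    (K : Type) [Field K] (a r : ℕ)
    (Fsub : ℕ → Subfield K) (hmono : Monotone Fsub)
    (C : Matrix (Fin r) (Fin a) K) (hC : ∀ i j, C i j ∈ Fsub 0)
    (hCns : AllSquareSubmatricesNonsingular C)
    (α : Fin a → K)
    (hα01 : ∀ j : Fin a, (j : ℕ) ≤ 1 → α j = 1)
    (hαmem : ∀ j : Fin a, 2 ≤ (j : ℕ) → α j ∈ Fsub (j : ℕ) ∧ α j ∉ Fsub ((j : ℕ) - 1))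
    (D : Matrix (Fin r) (Fin a) K)
    (hD0 : ∀ (i : Fin r) (j : Fin a), (j : ℕ) ≤ 1 → D i j = 0)
    (hDmem : ∀ (i : Fin r) (j : Fin a), 2 ≤ (j : ℕ) → D i j ∈ Fsub ((j : ℕ) - 1)) :
    AllSquareSubmatricesNonsingular (gammaMatrix C α + D) := by
  rw [← spliceCols_of_le (gammaMatrix C α + D) C le_rfl]
  exact allSquareSubmatricesNonsingular_spliceCols_gammaMatrix_add hmono hC hCns hα01 hαmem
    hD0 hDmem a
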